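/- arXiv:1601.01779 — 6 statements merged into one kernel-verified Lean document; each statement's English description precedes it below -/
import Mathlib

section
/- Over any field k, the polynomial t_1·t_2² is determined by (t_1, t_1·t_2), but t_1·t_2² does not lie in the k-subalgebra of k[t_1,t_2] generated by t_1 and t_1·t_2. -/
open MvPolynomial

/-- `p` vanishes at every point of `A`. -/
def VanishesOn {k : Type*} [CommSemiring k] {m : ℕ} (A : Set (Fin m → k))
    (p : MvPolynomial (Fin m) k) : Prop :=
  ∀ a ∈ A, eval a p = 0

/-- The Zariski closure of `A ⊆ k^m` has dimension at most `d` (with `dim ∅ = -1`):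
for every index set `S` with more than `d` elements, the vanishing ideal of `A`
contains a nonzero polynomial supported on the variables in `S`. -/
def ZClosureDimLE {k : Type*} [CommSemiring k] {m : ℕ} (A : Set (Fin m → k)) (d : ℤ) : Prop :=
  ∀ S : Finset (Fin m), d < (S.card : ℤ) →
    ∃ p : MvPolynomial (Fin m) k, p ≠ 0 ∧
      p ∈ MvPolynomial.supported k (↑S : Set (Fin m)) ∧ VanishesOn A p

/-- The range of the polynomial map `k^n → k^m` induced by `f`. -/
def polyRange {k : Type*} [CommSemiring k] {m n : ℕ}
    (f : Fin m → MvPolynomial (Fin n) k) : Set (Fin m → k) :=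
  Set.range fun a : Fin n → k => fun i => eval a (f i)

/-- `f` is almost surjective on `k`: the Zariski closure of the complement of the range
of the induced map `k^n → k^m` has dimension at most `m - 2`. -/
def AlmostSurj {k : Type*} [CommSemiring k] {m n : ℕ}
    (f : Fin m → MvPolynomial (Fin n) k) : Prop :=
  ZClosureDimLE (polyRange f)ᶜ ((m : ℤ) - 2)

/-- `g` is determined by `f`. -/
def Determined {k : Type*} [CommSemiring k] {m n : ℕ}
    (f : Fin m → MvPolynomial (Fin n) k) (g : MvPolynomial (Fin n) k) : Prop :=
  ∀ a b : Fin n → k, (∀ i, eval a (f i) = eval b (f i)) → eval a g = eval b g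

theorem stmt1 {k : Type*} [Field k] :
    Determined ![X 0, X 0 * X 1] (X 0 * X 1 ^ 2 : MvPolynomial (Fin 2) k) ∧
    (X 0 * X 1 ^ 2 : MvPolynomial (Fin 2) k) ∉
      Algebra.adjoin k ({X 0, X 0 * X 1} : Set (MvPolynomial (Fin 2) k)) := by
  constructor
  · intro a b h
    have h0 := h 0
    have h1 := h 1
    simp only [Matrix.cons_val_zero, Matrix.cons_val_one, Matrix.head_cons, map_mul, map_pow,
      eval_X] at h0 h1 ⊢
    by_cases ha : a 0 = 0
    · rw [ha] at h0 ⊢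
      rw [← h0]; ring
    · have : a 1 = b 1 := mul_left_cancel₀ ha (by rw [h1, h0])
      rw [h0, this]
  · intro hmem
    have hP : ∀ m ∈ (X 0 * X 1 ^ 2 : MvPolynomial (Fin 2) k).support, m 1 ≤ m 0 := by
      refine Algebra.adjoin_induction ?_ ?_ ?_ ?_ hmem
      · rintro p (rfl | rfl) m hm
        · rw [MvPolynomial.support_X, Finset.mem_singleton] at hm
          subst hm; simp
        · have he : (X 0 * X 1 : MvPolynomial (Fin 2) k) =
              monomial (Finsupp.single 0 1 + Finsupp.single 1 1) 1 := by
            rw [← pow_one (X 0 : MvPolynomial (Fin 2) k), ← pow_one (X 1 : MvPolynomial (Fin 2) k),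
              MvPolynomial.X_pow_eq_monomial, MvPolynomial.X_pow_eq_monomial,
              MvPolynomial.monomial_mul, one_mul]
          rw [he] at hm
          have h := MvPolynomial.support_monomial_subset hm
          rw [Finset.mem_singleton] at h
          subst h; simp
      · intro r m hm
        rw [MvPolynomial.algebraMap_eq, MvPolynomial.C_apply] at hm
        have h := MvPolynomial.support_monomial_subset hm
        rw [Finset.mem_singleton] at h
        subst h; simp
      · intro p q hp hq ihp ihq m hm
        rcases Finset.mem_union.mp (MvPolynomial.support_add hm) with h | h
        · exact ihp m h
        · exact ihq m h
      · intro p q hp hq ihp ihq m hm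
        have h := MvPolynomial.support_mul _ _ hm
        rw [Finset.mem_add] at h
        obtain ⟨m1, hm1, m2, hm2, rfl⟩ := h
        simp only [Finsupp.add_apply]
        exact add_le_add (ihp m1 hm1) (ihq m2 hm2)
    have he : (X 0 * X 1 ^ 2 : MvPolynomial (Fin 2) k) =
        monomial (Finsupp.single 0 1 + Finsupp.single 1 2) 1 := by
      rw [← pow_one (X 0 : MvPolynomial (Fin 2) k),
        MvPolynomial.X_pow_eq_monomial, MvPolynomial.X_pow_eq_monomial,
        MvPolynomial.monomial_mul, one_mul]
    have hmem2 : (Finsupp.single 0 1 + Finsupp.single 1 2 : Fin 2 →₀ ℕ) ∈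
        (X 0 * X 1 ^ 2 : MvPolynomial (Fin 2) k).support := by
      rw [MvPolynomial.mem_support_iff, he, MvPolynomial.coeff_monomial]
      simp
    have := hP _ hmem2
    simp at this
end

section
/- Let k be a field of positive characteristic χ. Then t_1 is determined by the single polynomial t_1^χ, but t_1 does not lie in the subfield k(t_1^χ) of k(t_1). -/
open MvPolynomial

theorem stmt3 {k : Type*} [Field k] (χ : ℕ) [CharP k χ] (hχ : 0 < χ) :
    (∀ a b : k, Polynomial.eval a (Polynomial.X ^ χ : Polynomial k)
        = Polynomial.eval b (Polynomial.X ^ χ) →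
        Polynomial.eval a (Polynomial.X : Polynomial k) = Polynomial.eval b Polynomial.X) ∧
    ¬ ∃ r s : Polynomial k, s.comp (Polynomial.X ^ χ) ≠ 0 ∧
        Polynomial.X * s.comp (Polynomial.X ^ χ) = r.comp (Polynomial.X ^ χ) := by
  haveI : NeZero χ := ⟨hχ.ne'⟩
  haveI : Fact (Nat.Prime χ) := ⟨(CharP.char_is_prime_of_pos k χ).out⟩
  constructor
  · intro a b h
    simp only [Polynomial.eval_pow, Polynomial.eval_X] at h ⊢
    exact frobenius_inj k χ h
  · rintro ⟨r, s, hs, heq⟩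
    have hχ2 : 2 ≤ χ := (Fact.out (p := Nat.Prime χ)).two_le
    have hXχ : (Polynomial.X ^ χ : Polynomial k).natDegree = χ := by
      simp
    have h1 : (Polynomial.X * s.comp (Polynomial.X ^ χ)).natDegree
        = 1 + s.natDegree * χ := by
      rw [Polynomial.natDegree_mul Polynomial.X_ne_zero hs,
        Polynomial.natDegree_X, Polynomial.natDegree_comp, hXχ]
    have h2 : (r.comp (Polynomial.X ^ χ)).natDegree = r.natDegree * χ := by
      rw [Polynomial.natDegree_comp, hXχ]
    rw [heq, h2] at h1
    have hd : χ ∣ 1 := by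
      have := Nat.dvd_sub (dvd_mul_left χ r.natDegree) (dvd_mul_left χ s.natDegree)
      rwa [show r.natDegree * χ - s.natDegree * χ = 1 by omega] at this
    have := Nat.le_of_dvd one_pos hd
    omega
end

section
/- Let k be an algebraically closed field and let f = (f_1,...,f_m) ∈ k[t_1,...,t_n]^m be almost surjective on k. Then the polynomials f_1,...,f_m are algebraically independent over k. -/
open MvPolynomial

theorem stmt4 {k : Type*} [Field k] [IsAlgClosed k] {m n : ℕ}
    (f : Fin m → MvPolynomial (Fin n) k) (h : AlmostSurj f) :
    AlgebraicIndependent k f := by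
  rw [algebraicIndependent_iff]
  intro p hp
  by_contra hp0
  obtain ⟨q, hq0, -, hqvan⟩ := h Finset.univ (by simp)
  have hpq : p * q = 0 := by
    apply MvPolynomial.funext
    intro x
    rw [map_zero, map_mul]
    by_cases hx : x ∈ polyRange f
    · obtain ⟨a, rfl⟩ := hx
      have : eval a (aeval f p) = 0 := by rw [hp]; simp
      rw [aeval_def, eval₂_comp_left] at this
      have hring : (eval a).comp (algebraMap k (MvPolynomial (Fin n) k)) = RingHom.id k := by
        ext c; simp
      rw [hring] at this
      have h0 : eval (fun i => eval a (f i)) p = 0 := this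
      rw [h0, zero_mul]
    · rw [hqvan x hx, mul_zero]
  rcases mul_eq_zero.mp hpq with h' | h' <;> simp_all
end

section
/- Let k be an algebraically closed field and f = (f_1,...,f_m) ∈ k[t_1,...,t_n]^m almost surjective on k. Then k(f_1,...,f_m) ∩ k[t_1,...,t_n] = k[f_1,...,f_m]; that is, every polynomial that is a rational function of f_1,...,f_m is in fact a polynomial in f_1,...,f_m. -/
/-!
Write `F = (f_1, …, f_m)` and clear the denominator of `g = F^*(r) / F^*(s)` one prime factor
`q` of `s` at a time; it suffices that `F^*(q) ∣ F^*(r)` forces `q ∣ r`. The prime `q` involves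
some variable `y_i`, and almost surjectivity gives `p ≠ 0` free of `y_i` vanishing off the range
of `F`. Then `r * p` vanishes on all of `V(q)`, so `q ∣ r * p` by the Nullstellensatz, while
`q ∤ p` since a divisor of `p` cannot involve `y_i`.
-/

open MvPolynomial

namespace MvPolynomial

lemma eval_aeval {k : Type*} [CommSemiring k] {σ τ : Type*} (f : σ → MvPolynomial τ k)
    (a : τ → k) (p : MvPolynomial σ k) :
    eval a (aeval f p) = eval (fun i => eval a (f i)) p := by
  rw [aeval_def, algebraMap_eq, ← eval_assoc]
  rfl

lemma vars_subset_of_dvd {R σ : Type*} [CommSemiring R] [NoZeroDivisors R]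
    {p q : MvPolynomial σ R} (hqp : q ∣ p) (hp : p ≠ 0) : q.vars ⊆ p.vars := by
  obtain ⟨c, rfl⟩ := hqp
  intro i hi
  rw [mem_vars_iff_degreeOf_ne_zero] at hi ⊢
  rw [degreeOf_mul_eq (left_ne_zero_of_mul hp) (right_ne_zero_of_mul hp)]
  omega

lemma exists_mem_vars_of_not_isUnit {K σ : Type*} [Field K] {q : MvPolynomial σ K}
    (h0 : q ≠ 0) (hu : ¬IsUnit q) : ∃ i, i ∈ q.vars := by
  by_contra! hvars
  rw [← Finset.eq_empty_iff_forall_notMem, vars_eq_empty_iff_eq_C] at hvars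
  rw [hvars] at h0 hu
  exact hu (isUnit_iff_ne_zero.mpr (by simpa using h0) |>.map C)

lemma _root_.Prime.dvd_of_forall_eval_eq_zero {k σ : Type*} [Field k] [IsAlgClosed k]
    [Finite σ] {p q : MvPolynomial σ k} (hq : Prime q)
    (h : ∀ x, eval x q = 0 → eval x p = 0) : q ∣ p := by
  have hp : p ∈ vanishingIdeal k (zeroLocus k (Ideal.span {q})) :=
    mem_vanishingIdeal_iff.mpr fun x hx => h x (hx q (Ideal.subset_span rfl))
  rwa [vanishingIdeal_zeroLocus_eq_radical,
    ((Ideal.span_singleton_prime hq.ne_zero).mpr hq).radical,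
    Ideal.mem_span_singleton] at hp

end MvPolynomial

namespace AlmostSurj

variable {k : Type*} [Field k] {m n : ℕ} {f : Fin m → MvPolynomial (Fin n) k}

lemma exists_vanishing_without_var (hf : AlmostSurj f) (i : Fin m) :
    ∃ p : MvPolynomial (Fin m) k,
      p ≠ 0 ∧ i ∉ p.vars ∧ ∀ y ∉ polyRange f, eval y p = 0 := by
  have hcard : ((m : ℤ) - 2) < ((Finset.univ.erase i).card : ℤ) := by
    rw [Finset.card_erase_of_mem (Finset.mem_univ i), Finset.card_univ, Fintype.card_fin]
    have := i.pos
    omega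
  obtain ⟨p, hp0, hpS, hpA⟩ := hf _ hcard
  refine ⟨p, hp0, fun hi => ?_, hpA⟩
  simpa using mem_supported.mp hpS hi

variable [IsAlgClosed k]

lemma prime_dvd_of_aeval_dvd (hf : AlmostSurj f) {q r : MvPolynomial (Fin m) k} (hq : Prime q)
    (hqr : aeval f q ∣ aeval f r) : q ∣ r := by
  obtain ⟨i, hi⟩ := exists_mem_vars_of_not_isUnit hq.ne_zero hq.not_isUnit
  obtain ⟨p, hp0, hip, hpv⟩ := hf.exists_vanishing_without_var i
  have hrp : q ∣ r * p := by
    refine hq.dvd_of_forall_eval_eq_zero fun y hy => ?_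
    by_cases hy' : y ∈ polyRange f
    · obtain ⟨a, rfl⟩ := hy'
      obtain ⟨c, hc⟩ := hqr
      beta_reduce at hy ⊢
      rw [map_mul, ← eval_aeval f a r, hc, map_mul, eval_aeval f a q, hy, zero_mul, zero_mul]
    · rw [map_mul, hpv y hy', mul_zero]
  exact (hq.dvd_or_dvd hrp).resolve_right fun hqp => hip (vars_subset_of_dvd hqp hp0 hi)

lemma exists_aeval_eq_of_mul_aeval_eq (hf : AlmostSurj f) {g : MvPolynomial (Fin n) k}
    {r s : MvPolynomial (Fin m) k} (hs : aeval f s ≠ 0) (hgs : g * aeval f s = aeval f r) :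
    ∃ p : MvPolynomial (Fin m) k, aeval f p = g := by
  induction s using UniqueFactorizationMonoid.induction_on_prime generalizing r with
  | h₁ => exact absurd (map_zero _) hs
  | h₂ s hu =>
    obtain ⟨v, hv⟩ := hu.exists_right_inv
    refine ⟨r * v, ?_⟩
    rw [map_mul, ← hgs, mul_assoc, ← map_mul, hv, map_one, mul_one]
  | h₃ s q _ hq ih =>
    rw [map_mul] at hs hgs
    have hqr : aeval f q ∣ aeval f r := Dvd.intro (g * aeval f s) (by rw [← hgs]; ring)
    obtain ⟨r₁, rfl⟩ := hf.prime_dvd_of_aeval_dvd hq hqr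
    refine ih (r := r₁) (right_ne_zero_of_mul hs) (mul_left_cancel₀ (left_ne_zero_of_mul hs) ?_)
    rw [← map_mul, ← hgs]
    ring

end AlmostSurj

theorem stmt6 {k : Type*} [Field k] [IsAlgClosed k] {m n : ℕ}
    (f : Fin m → MvPolynomial (Fin n) k) (h : AlmostSurj f) (g : MvPolynomial (Fin n) k) :
    (∃ r s : MvPolynomial (Fin m) k, aeval f s ≠ 0 ∧ g * aeval f s = aeval f r) ↔
      ∃ p : MvPolynomial (Fin m) k, aeval f p = g := by
  constructor
  · rintro ⟨r, s, hs, hgs⟩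
    exact AlmostSurj.exists_aeval_eq_of_mul_aeval_eq h hs hgs
  · rintro ⟨p, rfl⟩
    exact ⟨p, 1, by simp, by simp⟩
end

section
/- Let k be an algebraically closed field of characteristic 0 and let f_1,...,f_m ∈ k[t_1,...,t_n] be algebraically independent over k. Then every polynomial g determined by (f_1,...,f_m) lies in k(f_1,...,f_m) ∩ k[t_1,...,t_n], i.e., k⟨f_1,...,f_m⟩ ⊆ k(f_1,...,f_m). -/
open MvPolynomial

/-!
Embed `k[t]` into its fraction field `L` and let `K = k(f) ⊆ L`. If `g` is determined by `f`,
then by the Nullstellensatz `g(t) - g(t')` lies in the radical of the ideal of `k[t, t']`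
generated by the `f_i(t) - f_i(t')`, so `g ⊗ 1 - 1 ⊗ g` is nilpotent in `L ⊗[K] L`.
Over a perfect field `K` this forces `g ∈ K`: `K[X]/(minpoly K g)` embeds into `L` (also when
`g` is transcendental and the minimal polynomial is `0`), and since `L` is flat over `K` the
nilpotent `g ⊗ 1 - 1 ⊗ X` shows that the radical polynomial `minpoly K g` divides a power of
`X - g`, hence divides `X - g` itself and has degree one.
-/

open scoped Polynomial TensorProduct

theorem Algebra.TensorProduct.map_id_injective {R L A B : Type*} [CommRing R] [CommRing L]
    [Algebra R L] [Module.Flat R L] [CommRing A] [CommRing B] [Algebra R A] [Algebra R B]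
    {j : A →ₐ[R] B} (hj : Function.Injective j) :
    Function.Injective (Algebra.TensorProduct.map (AlgHom.id R L) j) :=
  Module.Flat.lTensor_preserves_injective_linearMap j.toLinearMap hj

theorem minpoly.injective_adjoinRoot_liftAlgHom {K L : Type*} [Field K] [CommRing L] [Algebra K L]
    [Nontrivial L] (x : L) :
    Function.Injective (AdjoinRoot.liftAlgHom (minpoly K x) (Algebra.ofId K L) x
      (by rw [Algebra.toRingHom_ofId]; exact minpoly.aeval K x)) := by
  refine (injective_iff_map_eq_zero _).mpr fun a ha => ?_
  induction a using AdjoinRoot.induction_on with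
  | ih q =>
    rw [AdjoinRoot.mk_eq_zero, minpoly.dvd_iff]
    exact ha

theorem minpoly.isRadical_map {K L : Type*} [Field K] [PerfectField K] [Field L] [Algebra K L]
    (x : L) : IsRadical ((minpoly K x).map (algebraMap K L)) := by
  refine isRadical_iff_squarefree_or_zero.mpr ?_
  by_cases hx : IsIntegral K x
  · exact .inl ((PerfectField.separable_of_irreducible (minpoly.irreducible hx)).map).squarefree
  · simp [minpoly.eq_zero hx]

theorem AdjoinRoot.exists_map_dvd_pow_of_isNilpotent {K L : Type*} [Field K] [Field L]
    [Algebra K L] (P : K[X]) (x : L)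
    (h : IsNilpotent (x ⊗ₜ[K] (1 : AdjoinRoot P) - 1 ⊗ₜ[K] AdjoinRoot.root P)) :
    ∃ N, P.map (algebraMap K L) ∣ (Polynomial.X - Polynomial.C x) ^ N := by
  let χ : L ⊗[K] AdjoinRoot P →ₐ[K] AdjoinRoot (P.map (algebraMap K L)) :=
    Algebra.TensorProduct.productMap (IsScalarTower.toAlgHom K L _)
      (AdjoinRoot.mapAlgHom (Algebra.ofId K L) P _ (by rw [Algebra.toRingHom_ofId]))
  have hχ : -χ (x ⊗ₜ[K] 1 - 1 ⊗ₜ[K] AdjoinRoot.root P) =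
      AdjoinRoot.mk _ (Polynomial.X - Polynomial.C x) := by
    simp [χ]
  obtain ⟨N, hN⟩ := (h.map χ).neg
  refine ⟨N, AdjoinRoot.mk_eq_zero.mp ?_⟩
  rwa [hχ, ← map_pow] at hN

theorem mem_range_algebraMap_of_isNilpotent_tmul_sub_tmul {K L : Type*} [Field K] [PerfectField K]
    [Field L] [Algebra K L] {x : L} (hx : IsNilpotent (x ⊗ₜ[K] (1 : L) - 1 ⊗ₜ[K] x)) :
    x ∈ (algebraMap K L).range := by
  have hy : IsNilpotent
      (x ⊗ₜ[K] (1 : AdjoinRoot (minpoly K x)) - 1 ⊗ₜ[K] AdjoinRoot.root (minpoly K x)) := by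
    rw [← IsNilpotent.map_iff
      (Algebra.TensorProduct.map_id_injective (minpoly.injective_adjoinRoot_liftAlgHom x))]
    simpa using hx
  obtain ⟨N, hN⟩ := AdjoinRoot.exists_map_dvd_pow_of_isNilpotent _ x hy
  have hdvd : (minpoly K x).map (algebraMap K L) ∣ Polynomial.X - Polynomial.C x :=
    minpoly.isRadical_map x N _ hN
  have hne := Polynomial.X_sub_C_ne_zero x
  have hint : IsIntegral K x := minpoly.ne_zero_iff.mp fun h0 => hne <| by
    simpa [h0] using hdvd
  have hle := Polynomial.natDegree_le_of_dvd hdvd hne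
  rw [Polynomial.natDegree_map, Polynomial.natDegree_X_sub_C] at hle
  rw [← minpoly.natDegree_eq_one_iff]
  have := minpoly.natDegree_pos hint
  omega

namespace MvPolynomial

noncomputable def inlSubInr {R σ : Type*} [CommRing R] (p : MvPolynomial σ R) :
    MvPolynomial (σ ⊕ σ) R :=
  rename Sum.inl p - rename Sum.inr p

theorem isNilpotent_tmul_sub_tmul_of_inlSubInr_mem_radical {σ τ k K L : Type*} [CommRing k]
    [CommRing K] [CommRing L] [Algebra k K] [Algebra K L] [Algebra k L] [IsScalarTower k K L]
    (ι : MvPolynomial σ k →ₐ[k] L) {f : τ → MvPolynomial σ k}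
    (hf : ∀ i, ι (f i) ∈ (algebraMap K L).range) {g : MvPolynomial σ k}
    (hg : inlSubInr g ∈ (Ideal.span (Set.range fun i => inlSubInr (f i))).radical) :
    IsNilpotent (ι g ⊗ₜ[K] (1 : L) - 1 ⊗ₜ[K] ι g) := by
  let φ : MvPolynomial (σ ⊕ σ) k →ₐ[k] L ⊗[K] L :=
    aeval (Sum.elim (fun i => ι (X i) ⊗ₜ 1) (fun i => 1 ⊗ₜ ι (X i)))
  have hφ (p : MvPolynomial σ k) : φ (inlSubInr p) = ι p ⊗ₜ 1 - 1 ⊗ₜ ι p := by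
    have hl : φ.comp (rename Sum.inl) = (Algebra.TensorProduct.includeLeft (S := k)).comp ι := by
      ext i; simp [φ]
    have hr : φ.comp (rename Sum.inr) =
        ((Algebra.TensorProduct.includeRight).restrictScalars k).comp ι := by
      ext i; simp [φ]
    simp only [inlSubInr, map_sub, ← AlgHom.comp_apply, hl, hr]
    rfl
  have hker : Ideal.span (Set.range fun i => inlSubInr (f i)) ≤ RingHom.ker φ := by
    rw [Ideal.span_le]
    rintro _ ⟨i, rfl⟩
    obtain ⟨c, hc⟩ := hf i
    rw [SetLike.mem_coe, RingHom.mem_ker, hφ, ← hc,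
      Algebra.TensorProduct.tmul_one_eq_one_tmul, sub_self]
  obtain ⟨N, hN⟩ := hg
  exact ⟨N, by rw [← hφ, ← map_pow]; exact hker hN⟩

end MvPolynomial

theorem Determined.inlSubInr_mem_radical {k : Type*} [Field k] [IsAlgClosed k] {m n : ℕ}
    {f : Fin m → MvPolynomial (Fin n) k} {g : MvPolynomial (Fin n) k} (hg : Determined f g) :
    inlSubInr g ∈ (Ideal.span (Set.range fun i => inlSubInr (f i))).radical := by
  rw [← vanishingIdeal_zeroLocus_eq_radical (K := k)]
  intro x hx
  have hf (i : Fin m) : eval (x ∘ Sum.inl) (f i) = eval (x ∘ Sum.inr) (f i) := by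
    simpa [inlSubInr, eval_rename, sub_eq_zero] using hx _ (Ideal.subset_span ⟨i, rfl⟩)
  simpa [inlSubInr, eval_rename, sub_eq_zero] using hg _ _ hf

theorem exists_mul_aeval_eq_aeval_of_mem_adjoin {k A L τ : Type*} [Field k] [CommRing A]
    [Algebra k A] [Field L] [Algebra k L] {ι : A →ₐ[k] L} (hι : Function.Injective ι)
    {f : τ → A} {g : A}
    (hg : ι g ∈ IntermediateField.adjoin k (Set.range fun i => ι (f i))) :
    ∃ r s : MvPolynomial τ k, aeval f s ≠ 0 ∧ g * aeval f s = aeval f r := by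
  obtain ⟨r, s, hrs⟩ := (IntermediateField.mem_adjoin_range_iff _ _ _).mp hg
  rw [← comp_aeval_apply, ← comp_aeval_apply] at hrs
  by_cases hs : aeval f s = 0
  · have : Nontrivial A := (ι : A →+* L).domain_nontrivial
    have hg0 : g = 0 := hι (by rw [hrs, hs, map_zero, div_zero])
    exact ⟨0, 1, by simp, by simp [hg0]⟩
  · refine ⟨r, s, hs, hι ?_⟩
    rw [map_mul, hrs, div_mul_cancel₀ _ ((map_ne_zero_iff ι hι).mpr hs)]

theorem stmt11_general {k : Type*} [Field k] [IsAlgClosed k] [CharZero k] {m n : ℕ}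
    (f : Fin m → MvPolynomial (Fin n) k)
    (g : MvPolynomial (Fin n) k) (hg : Determined f g) :
    ∃ r s : MvPolynomial (Fin m) k, aeval f s ≠ 0 ∧ g * aeval f s = aeval f r := by
  let L := FractionRing (MvPolynomial (Fin n) k)
  let ι : MvPolynomial (Fin n) k →ₐ[k] L := IsScalarTower.toAlgHom k _ L
  let K := IntermediateField.adjoin k (Set.range fun i => ι (f i))
  have hfK (i : Fin m) : ι (f i) ∈ (algebraMap K L).range :=
    ⟨⟨_, IntermediateField.subset_adjoin k _ ⟨i, rfl⟩⟩, rfl⟩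
  have hnil := isNilpotent_tmul_sub_tmul_of_inlSubInr_mem_radical ι hfK hg.inlSubInr_mem_radical
  obtain ⟨c, hc⟩ := mem_range_algebraMap_of_isNilpotent_tmul_sub_tmul hnil
  have hgK : ι g ∈ K := hc ▸ c.2
  exact exists_mul_aeval_eq_aeval_of_mem_adjoin (ι := ι) (IsFractionRing.injective _ L) hgK

theorem stmt11 {k : Type*} [Field k] [IsAlgClosed k] [CharZero k] {m n : ℕ}
    (f : Fin m → MvPolynomial (Fin n) k) (hind : AlgebraicIndependent k f)
    (g : MvPolynomial (Fin n) k) (hg : Determined f g) :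
    ∃ r s : MvPolynomial (Fin m) k, aeval f s ≠ 0 ∧ g * aeval f s = aeval f r :=
  stmt11_general f g hg
end

section
/- Let k be an algebraically closed field of characteristic χ > 0 and let f_1,...,f_m ∈ k[t_1,...,t_n] be algebraically independent over k. Then every polynomial g determined by (f_1,...,f_m) satisfies: there exists ν ∈ ℕ₀ such that g^(χ^ν) ∈ k(f_1,...,f_m) ∩ k[t_1,...,t_n]. -/
/-!
Let `L = k(t)` and `F = k(f) ⊆ L`. By the Nullstellensatz, `g ⊗ 1 - 1 ⊗ g` lies in the radical
of the ideal of the fibre product `{(a, b) | f(a) = f(b)}`, generated by the `f_i ⊗ 1 - 1 ⊗ f_i`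
in `k[t, t']`; since we are in characteristic `χ`, a Frobenius power `g^q ⊗ 1 - 1 ⊗ g^q` lies in
the ideal itself. Mapping `k[t, t']` to `L ⊗_F L` kills that ideal, so `g^q ⊗ 1 = 1 ⊗ g^q`, and
since `L` is faithfully flat over the field `F` this forces `g^q ∈ F`.
-/

open MvPolynomial

open TensorProduct

noncomputable def fiberProductIdeal {R σ ι : Type*} [CommRing R] (f : ι → MvPolynomial σ R) :
    Ideal (MvPolynomial (σ ⊕ σ) R) :=
  Ideal.span (Set.range fun i => rename Sum.inl (f i) - rename Sum.inr (f i))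

theorem rename_sub_rename_mem_radical_fiberProductIdeal {k : Type*} [Field k] [IsAlgClosed k]
    {m n : ℕ} {f : Fin m → MvPolynomial (Fin n) k} {g : MvPolynomial (Fin n) k}
    (hg : Determined f g) :
    rename Sum.inl g - rename Sum.inr g ∈ (fiberProductIdeal f).radical := by
  rw [← vanishingIdeal_zeroLocus_eq_radical (K := k), mem_vanishingIdeal_iff]
  intro x hx
  have hfx : ∀ i, eval (x ∘ Sum.inl) (f i) = eval (x ∘ Sum.inr) (f i) := fun i => by
    simpa [sub_eq_zero, eval_rename] using
      (mem_zeroLocus_iff.1 hx) _ (Ideal.subset_span ⟨i, rfl⟩)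
  simpa [sub_eq_zero, eval_rename] using hg _ _ hfx

theorem Ideal.exists_pow_char_pow_sub_mem_of_sub_mem_radical {R : Type*} [CommRing R]
    (p : ℕ) [Fact p.Prime] [CharP R p] {I : Ideal R} {a b : R} (h : a - b ∈ I.radical) :
    ∃ ν : ℕ, a ^ p ^ ν - b ^ p ^ ν ∈ I := by
  obtain ⟨N, hN⟩ := h
  refine ⟨N, ?_⟩
  rw [← sub_pow_char_pow]
  exact I.pow_mem_of_pow_mem hN (Nat.lt_pow_self (Fact.out : p.Prime).one_lt).le

theorem eq_of_rename_sub_rename_mem_fiberProductIdeal {R σ ι T : Type*} [CommRing R]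
    [CommRing T] [Algebra R T] {α β : MvPolynomial σ R →ₐ[R] T} {f : ι → MvPolynomial σ R}
    (hf : ∀ i, α (f i) = β (f i)) {p : MvPolynomial σ R}
    (hp : rename Sum.inl p - rename Sum.inr p ∈ fiberProductIdeal f) : α p = β p := by
  let Φ : MvPolynomial (σ ⊕ σ) R →ₐ[R] T := aeval (Sum.elim (α ∘ X) (β ∘ X))
  have hΦl : Φ.comp (rename Sum.inl) = α := by ext; simp [Φ]
  have hΦr : Φ.comp (rename Sum.inr) = β := by ext; simp [Φ]
  have hΦ : fiberProductIdeal f ≤ RingHom.ker Φ := by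
    rw [fiberProductIdeal, Ideal.span_le]
    rintro _ ⟨i, rfl⟩
    simp [← AlgHom.comp_apply, hΦl, hΦr, hf]
  simpa [sub_eq_zero, ← AlgHom.comp_apply, hΦl, hΦr] using hΦ hp

theorem IntermediateField.tmul_one_eq_one_tmul_iff {F L : Type*} [Field F] [Field L]
    [Algebra F L] (K : IntermediateField F L) {x : L} :
    x ⊗ₜ[K] (1 : L) = 1 ⊗ₜ[K] x ↔ x ∈ K := by
  refine ⟨fun h => ?_, fun hx => Algebra.TensorProduct.tmul_one_eq_one_tmul (⟨x, hx⟩ : K)⟩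
  have hx : x ∈ Set.range (algebraMap K L) :=
    (Algebra.IsEffective.of_faithfullyFlat K L).eqLocus_includeLeft_includeRight ▸ h
  simpa using hx

theorem exists_mul_aeval_eq_aeval_of_algebraMap_mem_adjoin {k R L ι : Type*} [Field k]
    [CommRing R] [Field L] [Algebra k R] [Algebra k L] [Algebra R L] [IsScalarTower k R L]
    [FaithfulSMul R L] (f : ι → R) {x : R}
    (hx : algebraMap R L x ∈ IntermediateField.adjoin k (Set.range (algebraMap R L ∘ f))) :
    ∃ r s : MvPolynomial ι k, aeval f s ≠ 0 ∧ x * aeval f s = aeval f r := by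
  have hinj := FaithfulSMul.algebraMap_injective R L
  have : Nontrivial R := (algebraMap R L).domain_nontrivial
  obtain ⟨_, hr, _, hs, hrs⟩ := IntermediateField.mem_adjoin_iff_div.1 hx
  rw [Algebra.adjoin_range_eq_range_aeval] at hr hs
  obtain ⟨r, rfl⟩ := hr
  obtain ⟨s, rfl⟩ := hs
  simp only [AlgHom.toRingHom_eq_coe, RingHom.coe_coe, aeval_algebraMap_apply] at hrs
  by_cases hs : aeval f s = 0
  · refine ⟨0, 1, by simp, ?_⟩
    rw [hs, map_zero, div_zero] at hrs
    simp [hinj (hrs.trans (map_zero _).symm)]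
  · refine ⟨r, s, hs, hinj ?_⟩
    rw [map_mul, hrs, div_mul_cancel₀]
    exact (map_ne_zero_iff _ hinj).2 hs

theorem stmt12_general {k : Type*} [Field k] [IsAlgClosed k] (χ : ℕ) [CharP k χ] (hχ : 0 < χ)
    {m n : ℕ} (f : Fin m → MvPolynomial (Fin n) k)
    (g : MvPolynomial (Fin n) k) (hg : Determined f g) :
    ∃ ν : ℕ, ∃ r s : MvPolynomial (Fin m) k,
      aeval f s ≠ 0 ∧ g ^ χ ^ ν * aeval f s = aeval f r := by
  have : Fact χ.Prime := ⟨(CharP.char_is_prime_or_zero k χ).resolve_right hχ.ne'⟩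
  obtain ⟨ν, hν⟩ := Ideal.exists_pow_char_pow_sub_mem_of_sub_mem_radical χ
    (rename_sub_rename_mem_radical_fiberProductIdeal hg)
  let R := MvPolynomial (Fin n) k
  let L := FractionRing R
  let F := IntermediateField.adjoin k (Set.range (algebraMap R L ∘ f))
  let α : R →ₐ[k] L ⊗[F] L :=
    Algebra.TensorProduct.includeLeft.comp (IsScalarTower.toAlgHom k R L)
  let β : R →ₐ[k] L ⊗[F] L :=
    (Algebra.TensorProduct.includeRight.restrictScalars k).comp (IsScalarTower.toAlgHom k R L)
  have hαβ : ∀ p, algebraMap R L p ∈ F ↔ α p = β p := fun p => F.tmul_one_eq_one_tmul_iff.symm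
  refine ⟨ν, exists_mul_aeval_eq_aeval_of_algebraMap_mem_adjoin (L := L) f ?_⟩
  refine (hαβ _).2 (eq_of_rename_sub_rename_mem_fiberProductIdeal (α := α) (β := β) (f := f)
    (fun i => ?_) ?_)
  · exact (hαβ _).1 (IntermediateField.subset_adjoin _ _ ⟨i, rfl⟩)
  · rw [map_pow, map_pow]
    exact hν

theorem stmt12 {k : Type*} [Field k] [IsAlgClosed k] (χ : ℕ) [CharP k χ] (hχ : 0 < χ)
    {m n : ℕ} (f : Fin m → MvPolynomial (Fin n) k) (hind : AlgebraicIndependent k f)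
    (g : MvPolynomial (Fin n) k) (hg : Determined f g) :
    ∃ ν : ℕ, ∃ r s : MvPolynomial (Fin m) k,
      aeval f s ≠ 0 ∧ g ^ χ ^ ν * aeval f s = aeval f r :=
  stmt12_general χ hχ f g hg
end
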